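/- Let p ≥ 3 and let X₁, …, X_p be rank-one complex matrices of the same size. If Xᵢ + Xⱼ has rank at most one for all i ≠ j, then X₁ + X₂ + ⋯ + X_p has rank at most one. -/

import Mathlib

/-!
If rank-one maps `f` and `g` have different kernels, then neither kernel contains the other, and a
vector `v ∈ ker f \ ker g` gives `(f + g) v = g v ≠ 0`; when `f + g` has rank at most one this
forces `range g = range (f + g)`, and symmetrically `range f = range (f + g)`. So any two of the
`Xᵢ` share their range or their kernel. As the union of two equivalence relations is total only
if one of them is, all `Xᵢ` share one range, or all share one kernel, and either way the range of
`∑ Xᵢ` is at most one-dimensional.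
-/

open Module LinearMap

section
variable {K V W : Type*} [DivisionRing K] [AddCommGroup V] [Module K V] [AddCommGroup W]
  [Module K W]

theorem Submodule.eq_of_mem_of_finrank_le_one {L M : Submodule K W} [FiniteDimensional K L]
    [FiniteDimensional K M] (hL : finrank K L ≤ 1) (hM : finrank K M ≤ 1) {x : W} (hx : x ≠ 0)
    (hxL : x ∈ L) (hxM : x ∈ M) : L = M := by
  have hspan : ∀ N : Submodule K W, [FiniteDimensional K N] → finrank K N ≤ 1 → x ∈ N →
      N = K ∙ x :=
    fun N _ hN hxN => (eq_of_le_of_finrank_le ((Submodule.span_singleton_le_iff_mem _ _).2 hxN)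
      (by rw [finrank_span_singleton hx]; exact hN)).symm
  rw [hspan L hL hxL, hspan M hM hxM]

variable [FiniteDimensional K V]

theorem LinearMap.range_eq_range_add_of_ker_not_le {f g : V →ₗ[K] W}
    (hg : finrank K (range g) ≤ 1) (hfg : finrank K (range (f + g)) ≤ 1)
    (hker : ¬ ker f ≤ ker g) :
    range g = range (f + g) := by
  obtain ⟨v, hvf, hvg⟩ := SetLike.not_le_iff_exists.1 hker
  refine Submodule.eq_of_mem_of_finrank_le_one hg hfg hvg (mem_range_self g v) ⟨v, ?_⟩
  rw [add_apply, mem_ker.1 hvf, zero_add]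

theorem LinearMap.range_eq_or_ker_eq_of_finrank_range_add_le_one {f g : V →ₗ[K] W}
    (hf : finrank K (range f) = 1) (hg : finrank K (range g) = 1)
    (hfg : finrank K (range (f + g)) ≤ 1) : range f = range g ∨ ker f = ker g := by
  by_cases hker : ker f = ker g
  · exact .inr hker
  have hfinrank : finrank K (ker f) = finrank K (ker g) := by
    have := finrank_range_add_finrank_ker f; have := finrank_range_add_finrank_ker g; omega
  have hfg' : ¬ ker f ≤ ker g := fun h => hker (Submodule.eq_of_le_of_finrank_eq h hfinrank)
  have hgf : ¬ ker g ≤ ker f :=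
    fun h => hker (Submodule.eq_of_le_of_finrank_eq h hfinrank.symm).symm
  left
  calc range f = range (g + f) :=
        range_eq_range_add_of_ker_not_le hf.le (add_comm f g ▸ hfg) hgf
    _ = range g := by rw [add_comm]; exact (range_eq_range_add_of_ker_not_le hg.le hfg hfg').symm

theorem LinearMap.finrank_range_sum_le_of_forall_range_eq {ι : Type*} (s : Finset ι)
    (f : ι → V →ₗ[K] W) {i₀ : ι} (h : ∀ i ∈ s, range (f i) = range (f i₀)) :
    finrank K (range (∑ i ∈ s, f i)) ≤ finrank K (range (f i₀)) := by
  refine Submodule.finrank_mono ?_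
  rintro _ ⟨v, rfl⟩
  rw [sum_apply]
  exact Submodule.sum_mem _ fun i hi => h i hi ▸ mem_range_self (f i) v

theorem LinearMap.finrank_range_sum_le_of_forall_ker_eq {ι : Type*} (s : Finset ι)
    (f : ι → V →ₗ[K] W) {i₀ : ι} (h : ∀ i ∈ s, ker (f i) = ker (f i₀)) :
    finrank K (range (∑ i ∈ s, f i)) ≤ finrank K (range (f i₀)) := by
  have hker : ker (f i₀) ≤ ker (∑ i ∈ s, f i) := fun v hv => by
    rw [mem_ker, sum_apply]
    exact Finset.sum_eq_zero fun i hi => by rwa [← mem_ker, h i hi]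
  have := Submodule.finrank_mono hker
  have := finrank_range_add_finrank_ker (f i₀)
  have := finrank_range_add_finrank_ker (∑ i ∈ s, f i)
  omega
end

theorem Matrix.mulVecLin_sum {R ι m n : Type*} [CommSemiring R] [Fintype n] (s : Finset ι)
    (A : ι → Matrix m n R) : (∑ i ∈ s, A i).mulVecLin = ∑ i ∈ s, (A i).mulVecLin :=
  map_sum (Matrix.mulVecBilin R R) A s

theorem forall_eq_or_forall_eq_of_forall_eq_or_eq {ι α β : Type*} {F : ι → α} {G : ι → β}
    (h : ∀ i j, F i = F j ∨ G i = G j) : (∀ i j, F i = F j) ∨ ∀ i j, G i = G j := by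
  by_contra! ⟨⟨a, b, hab⟩, ⟨c, d, hcd⟩⟩
  have := h a c; have := h a d; have := h b c; have := h b d; have := h a b; have := h c d
  grind

open Matrix in
theorem stmt6 {m n p : ℕ} (X : Fin p → Matrix (Fin m) (Fin n) ℂ)
    (hrank : ∀ i, (X i).rank = 1)
    (hpair : ∀ i j, i ≠ j → (X i + X j).rank ≤ 1) :
    (∑ i, X i).rank ≤ 1 := by
  rcases isEmpty_or_nonempty (Fin p) with _ | ⟨⟨i₀⟩⟩
  · simp
  have hpair' (i j : Fin p) : range (X i).mulVecLin = range (X j).mulVecLin ∨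
      ker (X i).mulVecLin = ker (X j).mulVecLin := by
    rcases eq_or_ne i j with rfl | hij
    · exact .inl rfl
    refine range_eq_or_ker_eq_of_finrank_range_add_le_one (hrank i) (hrank j) ?_
    rw [← mulVecLin_add]; exact hpair i j hij
  rw [Matrix.rank, mulVecLin_sum, ← hrank i₀, Matrix.rank]
  rcases forall_eq_or_forall_eq_of_forall_eq_or_eq hpair' with h | h
  · exact finrank_range_sum_le_of_forall_range_eq _ _ fun i _ => h i i₀
  · exact finrank_range_sum_le_of_forall_ker_eq _ _ fun i _ => h i i₀
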